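/- Proposition 2: let S* be the unique maximal decodable set (the union of all decodable sets, which is decodable by Proposition 1). Then for every set U with ∅ ⊂ U ⊆ [K] \ S*, the rates satisfy R_U > I(X_U; Y1 | X_{S*}, Q). -/
import Mathlib


open scoped BigOperators
open Filter

set_option synthInstance.maxSize 4000
set_option synthInstance.maxHeartbeats 1000000
set_option maxHeartbeats 1000000

noncomputable section

/-- Shannon entropy (base 2) of a finitely supported distribution `p`. -/
def ent {α : Type*} [Fintype α] (p : α → ℝ) : ℝ := -∑ a, p a * Real.logb 2 (p a)

/-- The distribution (pushforward) of a random variable `f` on the finite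
probability space `(Ω, p)`. -/
def distOf {Ω β : Type*} [Fintype Ω] [DecidableEq β] (p : Ω → ℝ) (f : Ω → β) : β → ℝ :=
  fun b => ∑ ω, if f ω = b then p ω else 0

/-- The entropy `H(f)` of a random variable `f` on the finite probability space `(Ω, p)`. -/
def entOf {Ω β : Type*} [Fintype Ω] [Fintype β] [DecidableEq β] (p : Ω → ℝ) (f : Ω → β) : ℝ :=
  ent (distOf p f)

/-- The conditional entropy `H(f | g)`. -/
def condEnt {Ω β γ : Type*} [Fintype Ω] [Fintype β] [Fintype γ] [DecidableEq β] [DecidableEq γ]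
    (p : Ω → ℝ) (f : Ω → β) (g : Ω → γ) : ℝ :=
  entOf p (fun ω => (f ω, g ω)) - entOf p g

/-- The mutual information `I(f; g)`. -/
def mutInfo {Ω β γ : Type*} [Fintype Ω] [Fintype β] [Fintype γ] [DecidableEq β] [DecidableEq γ]
    (p : Ω → ℝ) (f : Ω → β) (g : Ω → γ) : ℝ :=
  entOf p f + entOf p g - entOf p (fun ω => (f ω, g ω))

/-- The conditional mutual information `I(f; g | h)`. -/
def condMutInfo {Ω β γ δ : Type*} [Fintype Ω] [Fintype β] [Fintype γ] [Fintype δ]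
    [DecidableEq β] [DecidableEq γ] [DecidableEq δ]
    (p : Ω → ℝ) (f : Ω → β) (g : Ω → γ) (h : Ω → δ) : ℝ :=
  entOf p (fun ω => (f ω, h ω)) + entOf p (fun ω => (g ω, h ω)) -
    entOf p (fun ω => (f ω, g ω, h ω)) - entOf p h

/-- `p` is a probability mass function on the finite alphabet `α`. -/
def IsPMF {α : Type*} [Fintype α] (p : α → ℝ) : Prop := (∀ a, 0 ≤ p a) ∧ ∑ a, p a = 1

/-- The number `2^{nR}` of messages at blocklength `n` and rate `R` (in bits). -/
def msgSize (n : ℕ) (R : ℝ) : ℕ := max 1 ⌊(2 : ℝ) ^ ((n : ℝ) * R)⌋₊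

instance (n : ℕ) (R : ℝ) : NeZero (msgSize n R) :=
  ⟨by have h : 1 ≤ msgSize n R := le_max_left _ _; omega⟩

/-- The `ε`-typical set: `xs` is `ε`-typical for the pmf `p` if the empirical frequency of
every symbol `a` is within `ε · p a` of `p a`. -/
def Typical {α : Type*} [Fintype α] [DecidableEq α] (p : α → ℝ) (ε : ℝ) {n : ℕ}
    (xs : Fin n → α) : Prop :=
  ∀ a, |((Finset.univ.filter fun i => xs i = a).card : ℝ) / (n : ℝ) - p a| ≤ ε * p a
section GeneralLemmas

variable {Ω β γ δ ε : Type*} [Fintype Ω] [Fintype β] [Fintype γ] [Fintype δ] [Fintype ε]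
  [DecidableEq β] [DecidableEq γ] [DecidableEq δ] [DecidableEq ε]

lemma sum_distOf_mul (p : Ω → ℝ) (f : Ω → β) (G : β → ℝ) :
    ∑ b, distOf p f b * G b = ∑ ω, p ω * G (f ω) := by
  simp only [distOf, Finset.sum_mul]
  rw [Finset.sum_comm]
  refine Finset.sum_congr rfl fun ω _ => ?_
  simp [ite_mul]

lemma sum_distOf (p : Ω → ℝ) (f : Ω → β) : ∑ b, distOf p f b = ∑ ω, p ω := by
  simpa using sum_distOf_mul p f (fun _ => 1)

lemma distOf_nonneg {p : Ω → ℝ} (hp : ∀ ω, 0 ≤ p ω) (f : Ω → β) (b : β) :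
    0 ≤ distOf p f b := by
  refine Finset.sum_nonneg fun ω _ => ?_
  split <;> simp [hp ω]

lemma entOf_eq_sum (p : Ω → ℝ) (f : Ω → β) :
    entOf p f = -∑ ω, p ω * Real.logb 2 (distOf p f (f ω)) := by
  rw [entOf, ent, sum_distOf_mul p f (fun b => Real.logb 2 (distOf p f b))]

lemma distOf_apply_congr (p : Ω → ℝ) {f : Ω → β} {f' : Ω → γ} (ω : Ω)
    (h : ∀ ω', f ω' = f ω ↔ f' ω' = f' ω) :
    distOf p f (f ω) = distOf p f' (f' ω) := by
  refine Finset.sum_congr rfl fun ω' _ => ?_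
  rw [if_congr (h ω') rfl rfl]

lemma entOf_congr (p : Ω → ℝ) {f : Ω → β} {f' : Ω → γ}
    (h : ∀ ω ω', f ω = f ω' ↔ f' ω = f' ω') :
    entOf p f = entOf p f' := by
  rw [entOf_eq_sum, entOf_eq_sum]
  congr 1
  refine Finset.sum_congr rfl fun ω _ => ?_
  rw [distOf_apply_congr p ω (fun ω' => h ω' ω)]

lemma distOf_triple_fst_thd (p : Ω → ℝ) (f : Ω → β) (g : Ω → γ) (h : Ω → δ) (b : β) (d : δ) :
    distOf p (fun ω => (f ω, h ω)) (b, d) =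
      ∑ c, distOf p (fun ω => (f ω, g ω, h ω)) (b, c, d) := by
  unfold distOf
  rw [Finset.sum_comm]
  refine Finset.sum_congr rfl fun ω _ => ?_
  by_cases h1 : f ω = b <;> by_cases h2 : h ω = d <;>
    simp [Prod.ext_iff, h1, h2]

lemma distOf_triple_snd_thd (p : Ω → ℝ) (f : Ω → β) (g : Ω → γ) (h : Ω → δ) (c : γ) (d : δ) :
    distOf p (fun ω => (g ω, h ω)) (c, d) =
      ∑ b, distOf p (fun ω => (f ω, g ω, h ω)) (b, c, d) := by
  unfold distOf
  rw [Finset.sum_comm]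
  refine Finset.sum_congr rfl fun ω _ => ?_
  by_cases h1 : g ω = c <;> by_cases h2 : h ω = d <;>
    simp [Prod.ext_iff, h1, h2]

lemma distOf_pair_snd (p : Ω → ℝ) (f : Ω → β) (h : Ω → δ) (d : δ) :
    distOf p h d = ∑ b, distOf p (fun ω => (f ω, h ω)) (b, d) := by
  unfold distOf
  rw [Finset.sum_comm]
  refine Finset.sum_congr rfl fun ω _ => ?_
  by_cases h2 : h ω = d <;> simp [Prod.ext_iff, h2]

end GeneralLemmas
section GeneralLemmas2
set_option linter.unusedSectionVars false

variable {Ω β γ δ ε : Type*} [Fintype Ω] [Fintype β] [Fintype γ] [Fintype δ] [Fintype ε]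
  [DecidableEq β] [DecidableEq γ] [DecidableEq δ] [DecidableEq ε]

lemma condMutInfo_nonneg {p : Ω → ℝ} (hp : IsPMF p) (f : Ω → β) (g : Ω → γ) (h : Ω → δ) :
    0 ≤ condMutInfo p f g h := by
  classical
  set r : β × γ × δ → ℝ := distOf p (fun ω => (f ω, g ω, h ω)) with hr
  set rfh : β × δ → ℝ := distOf p (fun ω => (f ω, h ω)) with hrfh
  set rgh : γ × δ → ℝ := distOf p (fun ω => (g ω, h ω)) with hrgh
  set rh : δ → ℝ := distOf p h with hrh
  have hrnn : ∀ x, 0 ≤ r x := fun x => distOf_nonneg hp.1 _ x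
  have hrfhnn : ∀ x, 0 ≤ rfh x := fun x => distOf_nonneg hp.1 _ x
  have hrghnn : ∀ x, 0 ≤ rgh x := fun x => distOf_nonneg hp.1 _ x
  have hrhnn : ∀ x, 0 ≤ rh x := fun x => distOf_nonneg hp.1 _ x
  -- marginals
  have hm1 : ∀ b d, rfh (b, d) = ∑ c, r (b, c, d) := fun b d =>
    distOf_triple_fst_thd p f g h b d
  have hm2 : ∀ c d, rgh (c, d) = ∑ b, r (b, c, d) := fun c d =>
    distOf_triple_snd_thd p f g h c d
  have hm3 : ∀ d, rh d = ∑ b, rfh (b, d) := fun d => distOf_pair_snd p f h d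
  have hm3' : ∀ d, rh d = ∑ c, rgh (c, d) := fun d => distOf_pair_snd p g h d
  -- dominations
  have hle1 : ∀ b c d, r (b, c, d) ≤ rfh (b, d) := by
    intro b c d; rw [hm1]
    exact Finset.single_le_sum (fun c _ => hrnn (b, c, d)) (Finset.mem_univ c)
  have hle2 : ∀ b c d, r (b, c, d) ≤ rgh (c, d) := by
    intro b c d; rw [hm2]
    exact Finset.single_le_sum (fun b _ => hrnn (b, c, d)) (Finset.mem_univ b)
  have hle3 : ∀ b d, rfh (b, d) ≤ rh d := by
    intro b d; rw [hm3]
    exact Finset.single_le_sum (fun b _ => hrfhnn (b, d)) (Finset.mem_univ b)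
  -- rewrite condMutInfo as a single sum
  have e1 : entOf p (fun ω => (f ω, h ω)) =
      -∑ x : β × γ × δ, r x * Real.logb 2 (rfh (x.1, x.2.2)) := by
    rw [entOf_eq_sum, hr,
      sum_distOf_mul p (fun ω => (f ω, g ω, h ω)) (fun x => Real.logb 2 (rfh (x.1, x.2.2)))]
  have e2 : entOf p (fun ω => (g ω, h ω)) =
      -∑ x : β × γ × δ, r x * Real.logb 2 (rgh (x.2.1, x.2.2)) := by
    rw [entOf_eq_sum, hr,
      sum_distOf_mul p (fun ω => (f ω, g ω, h ω)) (fun x => Real.logb 2 (rgh (x.2.1, x.2.2)))]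
  have e3 : entOf p (fun ω => (f ω, g ω, h ω)) =
      -∑ x : β × γ × δ, r x * Real.logb 2 (r x) := by
    rw [entOf_eq_sum, hr,
      sum_distOf_mul p (fun ω => (f ω, g ω, h ω)) (fun x => Real.logb 2 (r x))]
  have e4 : entOf p h = -∑ x : β × γ × δ, r x * Real.logb 2 (rh x.2.2) := by
    rw [entOf_eq_sum, hr,
      sum_distOf_mul p (fun ω => (f ω, g ω, h ω)) (fun x => Real.logb 2 (rh x.2.2))]
  have key : condMutInfo p f g h =
      ∑ x : β × γ × δ, r x * (Real.logb 2 (r x) + Real.logb 2 (rh x.2.2)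
        - Real.logb 2 (rfh (x.1, x.2.2)) - Real.logb 2 (rgh (x.2.1, x.2.2))) := by
    rw [condMutInfo, e1, e2, e3, e4]
    simp only [mul_add, mul_sub, Finset.sum_sub_distrib, Finset.sum_add_distrib]
    ring
  -- the comparison distribution
  set q : β × γ × δ → ℝ := fun x =>
    if rh x.2.2 = 0 then 0 else rfh (x.1, x.2.2) * rgh (x.2.1, x.2.2) / rh x.2.2 with hq
  have hqnn : ∀ x, 0 ≤ q x := by
    intro x; rw [hq]; dsimp only
    split
    · exact le_refl 0
    · exact div_nonneg (mul_nonneg (hrfhnn _) (hrghnn _)) (hrhnn _)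
  have hlog2 : (0:ℝ) < Real.log 2 := Real.log_pos one_lt_two
  have hterm : ∀ x : β × γ × δ, (r x - q x) / Real.log 2 ≤
      r x * (Real.logb 2 (r x) + Real.logb 2 (rh x.2.2)
        - Real.logb 2 (rfh (x.1, x.2.2)) - Real.logb 2 (rgh (x.2.1, x.2.2))) := by
    rintro ⟨b, c, d⟩
    by_cases hrx : r (b, c, d) = 0
    · simp only [hrx, zero_mul, zero_sub]
      rw [div_le_iff₀ hlog2]
      simpa using hqnn (b, c, d)
    · have hrpos : 0 < r (b, c, d) := lt_of_le_of_ne (hrnn _) (Ne.symm hrx)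
      have hfh : 0 < rfh (b, d) := lt_of_lt_of_le hrpos (hle1 b c d)
      have hgh : 0 < rgh (c, d) := lt_of_lt_of_le hrpos (hle2 b c d)
      have hhd : 0 < rh d := lt_of_lt_of_le hfh (hle3 b d)
      have hqx : q (b, c, d) = rfh (b, d) * rgh (c, d) / rh d := by
        rw [hq]; simp [ne_of_gt hhd]
      have hqpos : 0 < q (b, c, d) := by rw [hqx]; positivity
      have hlog : Real.log (q (b, c, d) / r (b, c, d)) ≤ q (b, c, d) / r (b, c, d) - 1 :=
        Real.log_le_sub_one_of_pos (by positivity)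
      have hexp : Real.logb 2 (r (b, c, d)) + Real.logb 2 (rh d)
          - Real.logb 2 (rfh (b, d)) - Real.logb 2 (rgh (c, d)) =
          -(Real.log (q (b, c, d) / r (b, c, d))) / Real.log 2 := by
        rw [Real.log_div (ne_of_gt hqpos) (ne_of_gt hrpos), hqx,
          Real.log_div (by positivity) (ne_of_gt hhd),
          Real.log_mul (ne_of_gt hfh) (ne_of_gt hgh)]
        simp only [Real.logb]
        ring
      have heq2 : r (b, c, d) * (-Real.log (q (b, c, d) / r (b, c, d)) / Real.log 2) =
          (-(r (b, c, d) * Real.log (q (b, c, d) / r (b, c, d)))) / Real.log 2 := by ring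
      have h1 : r (b, c, d) * Real.log (q (b, c, d) / r (b, c, d)) ≤ q (b, c, d) - r (b, c, d) := by
        have := mul_le_mul_of_nonneg_left hlog (le_of_lt hrpos)
        calc r (b, c, d) * Real.log (q (b, c, d) / r (b, c, d))
            ≤ r (b, c, d) * (q (b, c, d) / r (b, c, d) - 1) := this
          _ = q (b, c, d) - r (b, c, d) := by field_simp
      rw [hexp, heq2, div_le_div_iff₀ hlog2 hlog2]
      nlinarith [hlog2]
  have hsumq : ∑ x : β × γ × δ, q x = ∑ ω, p ω := by
    have step1 : ∑ x : β × γ × δ, q x = ∑ b, ∑ c, ∑ d, q (b, c, d) := by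
      rw [Fintype.sum_prod_type]
      exact Finset.sum_congr rfl fun b _ => Fintype.sum_prod_type _
    have step2 : (∑ b, ∑ c, ∑ d : δ, q (b, c, d)) = ∑ d, ∑ b, ∑ c, q (b, c, d) := by
      rw [show (∑ b, ∑ c, ∑ d : δ, q (b, c, d)) = ∑ b, ∑ d, ∑ c : γ, q (b, c, d) from
        Finset.sum_congr rfl fun b _ => Finset.sum_comm]
      exact Finset.sum_comm
    have hd : ∀ d, ∑ b, ∑ c, q (b, c, d) = rh d := by
      intro d
      by_cases hhd : rh d = 0
      · have hb : ∀ b, rfh (b, d) = 0 := by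
          intro b
          have h1 := hle3 b d
          have h2 := hrfhnn (b, d)
          linarith
        simp only [hq]
        simp [hhd, hb]
      · simp only [hq]
        simp only [if_neg hhd]
        rw [show ∑ b, ∑ c, rfh (b, d) * rgh (c, d) / rh d
            = (∑ b, rfh (b, d)) * (∑ c, rgh (c, d)) / rh d by
          rw [Finset.sum_mul, Finset.sum_div]
          refine Finset.sum_congr rfl fun b _ => ?_
          rw [Finset.mul_sum, Finset.sum_div]]
        rw [← hm3 d, ← hm3' d]
        field_simp
    rw [step1, step2]
    rw [Finset.sum_congr rfl fun d _ => hd d]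
    rw [hrh, sum_distOf]
  have hsumr : ∑ x : β × γ × δ, r x = ∑ ω, p ω := by rw [hr, sum_distOf]
  calc (0:ℝ) = (∑ x : β × γ × δ, (r x - q x)) / Real.log 2 := by
        rw [Finset.sum_sub_distrib, hsumr, hsumq]; simp
    _ = ∑ x : β × γ × δ, (r x - q x) / Real.log 2 := by rw [Finset.sum_div]
    _ ≤ _ := by rw [key]; exact Finset.sum_le_sum fun x _ => hterm x
end GeneralLemmas2
section GeneralLemmas3
set_option linter.unusedSectionVars false

variable {Ω β β' γ γ' δ δ' ε : Type*} [Fintype Ω] [Fintype β] [Fintype γ] [Fintype δ] [Fintype ε]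
  [Fintype β'] [Fintype γ'] [Fintype δ']
  [DecidableEq β] [DecidableEq γ] [DecidableEq δ] [DecidableEq ε]
  [DecidableEq β'] [DecidableEq γ'] [DecidableEq δ']

lemma condMutInfo_congr (p : Ω → ℝ) {f : Ω → β} {f' : Ω → β'} {g : Ω → γ} {g' : Ω → γ'}
    {h : Ω → δ} {h' : Ω → δ'}
    (hf : ∀ ω ω', f ω = f ω' ↔ f' ω = f' ω')
    (hg : ∀ ω ω', g ω = g ω' ↔ g' ω = g' ω')
    (hh : ∀ ω ω', h ω = h ω' ↔ h' ω = h' ω') :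
    condMutInfo p f g h = condMutInfo p f' g' h' := by
  unfold condMutInfo
  rw [entOf_congr p (f := fun ω => (f ω, h ω)) (f' := fun ω => (f' ω, h' ω))
      (fun ω ω' => by simp only [Prod.ext_iff]; rw [hf ω ω', hh ω ω']),
    entOf_congr p (f := fun ω => (g ω, h ω)) (f' := fun ω => (g' ω, h' ω))
      (fun ω ω' => by simp only [Prod.ext_iff]; rw [hg ω ω', hh ω ω']),
    entOf_congr p (f := fun ω => (f ω, g ω, h ω)) (f' := fun ω => (f' ω, g' ω, h' ω))
      (fun ω ω' => by simp only [Prod.ext_iff]; rw [hf ω ω', hg ω ω', hh ω ω']),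
    entOf_congr p (f := h) (f' := h') hh]

lemma condMutInfo_comm (p : Ω → ℝ) (f : Ω → β) (g : Ω → γ) (h : Ω → δ) :
    condMutInfo p f g h = condMutInfo p g f h := by
  unfold condMutInfo
  rw [entOf_congr p (f := fun ω => (f ω, g ω, h ω)) (f' := fun ω => (g ω, f ω, h ω))
      (fun ω ω' => by simp only [Prod.ext_iff]; tauto)]
  ring

/-- Chain rule: `I((A,B); Y | C) = I(A; Y | C) + I(B; Y | (A,C))`. -/
lemma condMutInfo_pair (p : Ω → ℝ) (A : Ω → β) (B : Ω → γ) (Y : Ω → δ) (C : Ω → ε) :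
    condMutInfo p (fun ω => (A ω, B ω)) Y C =
      condMutInfo p A Y C + condMutInfo p B Y (fun ω => (A ω, C ω)) := by
  unfold condMutInfo
  have e1 : entOf p (fun ω => ((A ω, B ω), C ω)) = entOf p (fun ω => (B ω, (A ω, C ω))) :=
    entOf_congr p (fun ω ω' => by simp only [Prod.ext_iff]; tauto)
  have e2 : entOf p (fun ω => (Y ω, (A ω, C ω))) = entOf p (fun ω => (A ω, Y ω, C ω)) :=
    entOf_congr p (fun ω ω' => by simp only [Prod.ext_iff]; tauto)
  have e3 : entOf p (fun ω => ((A ω, B ω), Y ω, C ω)) =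
      entOf p (fun ω => (B ω, Y ω, (A ω, C ω))) :=
    entOf_congr p (fun ω ω' => by simp only [Prod.ext_iff]; tauto)
  rw [e1, e2, e3]
  ring

/-- If `I(A; B | C) = 0` then conditioning on `B` as well can only increase `I(A; Y | ·)`. -/
lemma condMutInfo_mono_of_indep {p : Ω → ℝ} (hp : IsPMF p)
    (A : Ω → β) (B : Ω → γ) (Y : Ω → δ) (C : Ω → ε)
    (hzero : condMutInfo p A B C = 0) :
    condMutInfo p A Y C ≤ condMutInfo p A Y (fun ω => (B ω, C ω)) := by
  have h1 : condMutInfo p (fun ω => (B ω, Y ω)) A C =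
      condMutInfo p B A C + condMutInfo p Y A (fun ω => (B ω, C ω)) :=
    condMutInfo_pair p B Y A C
  have h2 : condMutInfo p (fun ω => (Y ω, B ω)) A C =
      condMutInfo p Y A C + condMutInfo p B A (fun ω => (Y ω, C ω)) :=
    condMutInfo_pair p Y B A C
  have h12 : condMutInfo p (fun ω => (B ω, Y ω)) A C =
      condMutInfo p (fun ω => (Y ω, B ω)) A C :=
    condMutInfo_congr p (fun ω ω' => by simp only [Prod.ext_iff]; tauto)
      (fun ω ω' => Iff.rfl) (fun ω ω' => Iff.rfl)
  have c1 : condMutInfo p B A C = condMutInfo p A B C := condMutInfo_comm p B A C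
  have c2 : condMutInfo p Y A (fun ω => (B ω, C ω)) =
      condMutInfo p A Y (fun ω => (B ω, C ω)) := condMutInfo_comm p Y A _
  have c3 : condMutInfo p Y A C = condMutInfo p A Y C := condMutInfo_comm p Y A C
  have hnn : 0 ≤ condMutInfo p B A (fun ω => (Y ω, C ω)) := condMutInfo_nonneg hp B A _
  linarith

end GeneralLemmas3
section PiHelper
set_option linter.unusedSectionVars false

/-- Summing over all tuples with prescribed values on a sub-family factorizes. -/
lemma sum_pi_ite {ι : Type*} [Fintype ι] [DecidableEq ι] {X : ι → Type*}
    [∀ i, Fintype (X i)] [∀ i, DecidableEq (X i)]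
    (A : Finset ι) (f : ∀ i, X i → ℝ) (v : ∀ i : {x // x ∈ A}, X i.1) :
    ∑ x : ∀ i, X i, (if (fun i : {x // x ∈ A} => x i.1) = v then ∏ i, f i (x i) else 0) =
      (∏ i : {x // x ∈ A}, f i.1 (v i)) * ∏ i : {x // ¬ x ∈ A}, (∑ t, f i.1 t) := by
  set e := Equiv.piEquivPiSubtypeProd (fun x => x ∈ A) X with he
  rw [← e.symm.sum_comp
    (fun x => if (fun i : {x // x ∈ A} => x i.1) = v then ∏ i, f i (x i) else 0)]
  rw [Fintype.sum_prod_type]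
  have hres : ∀ (u : ∀ i : {x // x ∈ A}, X i.1) (w : ∀ i : {x // ¬ x ∈ A}, X i.1),
      (fun i : {x // x ∈ A} => (e.symm (u, w)) i.1) = u := by
    intro u w
    funext i
    simp [he, Equiv.piEquivPiSubtypeProd, i.2]
  have hprod : ∀ (u : ∀ i : {x // x ∈ A}, X i.1) (w : ∀ i : {x // ¬ x ∈ A}, X i.1),
      ∏ i, f i ((e.symm (u, w)) i) =
        (∏ i : {x // x ∈ A}, f i.1 (u i)) * ∏ i : {x // ¬ x ∈ A}, f i.1 (w i) := by
    intro u w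
    rw [← Fintype.prod_subtype_mul_prod_subtype (fun x => x ∈ A)
      (fun i => f i ((e.symm (u, w)) i))]
    congr 1
    · refine Finset.prod_congr ?_ fun i _ => by
        simp [he, Equiv.piEquivPiSubtypeProd, i.2]
      first
      | rfl
      | (congr 1; exact Subsingleton.elim _ _)
    · refine Finset.prod_congr ?_ fun i _ => by
        simp [he, Equiv.piEquivPiSubtypeProd, i.2]
      first
      | rfl
      | (congr 1; exact Subsingleton.elim _ _)
  have hinner : ∀ u : ∀ i : {x // x ∈ A}, X i.1,
      (∑ w : ∀ i : {x // ¬ x ∈ A}, X i.1,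
        if (fun i : {x // x ∈ A} => (e.symm (u, w)) i.1) = v
      then ∏ i, f i ((e.symm (u, w)) i) else 0) =
      if u = v then (∏ i : {x // x ∈ A}, f i.1 (u i)) *
        ∑ w : ∀ i : {x // ¬ x ∈ A}, X i.1, ∏ i : {x // ¬ x ∈ A}, f i.1 (w i)
      else 0 := by
    intro u
    by_cases huv : u = v
    · simp only [hres, huv, if_pos rfl, Finset.mul_sum]
      refine Finset.sum_congr rfl fun w _ => ?_
      simp [hprod, huv]
    · simp only [hres, if_neg huv, Finset.sum_const_zero]
  rw [Finset.sum_congr rfl fun u _ => hinner u]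
  rw [Finset.sum_ite_eq' Finset.univ v
    (fun u => (∏ i : {x // x ∈ A}, f i.1 (u i)) *
      ∑ w : ∀ i : {x // ¬ x ∈ A}, X i.1, ∏ i : {x // ¬ x ∈ A}, f i.1 (w i))]
  simp only [Finset.mem_univ, if_pos]
  congr 1
  rw [← Fintype.prod_sum (fun (i : {x // ¬ x ∈ A}) (t : X i.1) => f i.1 t)]
end PiHelper
section SingleLetter

variable {K : ℕ} {Q Yo : Type*} {X : Fin K → Type*}
  [Fintype Q] [DecidableEq Q] [Fintype Yo] [DecidableEq Yo]
  [∀ k, Fintype (X k)] [∀ k, DecidableEq (X k)]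

variable (pQ : Q → ℝ) (pX : ∀ k, Q → X k → ℝ) (W : (∀ k, X k) → Yo → ℝ)

/-- The joint distribution of `(Q, X_{[K]}, Y1)` with
`p(q, x_{[K]}, y1) = p(q) p(x1|q) ⋯ p(xK|q) p(y1 | x_{[K]})`. -/
def SjointP : Q × (∀ k, X k) × Yo → ℝ := fun z =>
  pQ z.1 * (∏ k, pX k z.1 (z.2.1 k)) * W z.2.1 z.2.2
set_option linter.unusedSectionVars false

lemma SjointP_isPMF (hpQ : IsPMF pQ) (hpX : ∀ k q, IsPMF (pX k q)) (hW : ∀ x, IsPMF (W x)) :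
    IsPMF (SjointP pQ pX W) := by
  constructor
  · intro z
    exact mul_nonneg (mul_nonneg (hpQ.1 _) (Finset.prod_nonneg fun k _ => (hpX k _).1 _))
      ((hW _).1 _)
  · unfold SjointP
    rw [Fintype.sum_prod_type]
    have h1 : ∀ a : Q, ∑ b : (∀ k, X k) × Yo, pQ a * (∏ k, pX k a (b.1 k)) * W b.1 b.2
        = pQ a := by
      intro a
      rw [Fintype.sum_prod_type]
      have h2 : ∀ x : ∀ k, X k, ∑ y : Yo, pQ a * (∏ k, pX k a (x k)) * W x y
          = pQ a * (∏ k, pX k a (x k)) := by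
        intro x
        rw [← Finset.mul_sum, (hW x).2, mul_one]
      rw [Finset.sum_congr rfl fun x _ => h2 x, ← Finset.mul_sum,
        ← Fintype.prod_sum (fun k (t : X k) => pX k a t)]
      have : ∀ k : Fin K, ∑ t : X k, pX k a t = 1 := fun k => (hpX k a).2
      rw [Finset.prod_congr rfl fun k _ => this k]
      simp
    rw [Finset.sum_congr rfl fun a _ => h1 a, hpQ.2]

lemma distOf_XQ (hpX : ∀ k q, IsPMF (pX k q)) (hW : ∀ x, IsPMF (W x)) (A : Finset (Fin K))
    (v : ∀ k : {k // k ∈ A}, X k.1) (q0 : Q) :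
    distOf (SjointP pQ pX W) (fun z => ((fun k : {k // k ∈ A} => z.2.1 k.1), z.1)) (v, q0) =
      pQ q0 * ∏ k : {k // k ∈ A}, pX k.1 q0 (v k) := by
  unfold distOf SjointP
  rw [Fintype.sum_prod_type]
  have step1 : ∀ a : Q, (∑ b : (∀ k, X k) × Yo,
      if ((fun k : {k // k ∈ A} => b.1 k.1), a) = (v, q0) then
        pQ a * (∏ k, pX k a (b.1 k)) * W b.1 b.2 else 0) =
      ∑ x : ∀ k, X k, (if ((fun k : {k // k ∈ A} => x k.1), a) = (v, q0) then
        pQ a * (∏ k, pX k a (x k)) else 0) := by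
    intro a
    rw [Fintype.sum_prod_type]
    refine Finset.sum_congr rfl fun x _ => ?_
    by_cases hc : ((fun k : {k // k ∈ A} => x k.1), a) = (v, q0)
    · simp only [if_pos hc, ← Finset.mul_sum, (hW x).2, mul_one]
    · simp only [if_neg hc, Finset.sum_const_zero]
  rw [Finset.sum_congr rfl fun a _ => step1 a]
  have step2 : ∀ a : Q, (∑ x : ∀ k, X k,
      if ((fun k : {k // k ∈ A} => x k.1), a) = (v, q0) then
        pQ a * (∏ k, pX k a (x k)) else 0) =
      if a = q0 then (∑ x : ∀ k, X k, if (fun k : {k // k ∈ A} => x k.1) = v then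
        pQ a * (∏ k, pX k a (x k)) else 0) else 0 := by
    intro a
    by_cases h1 : a = q0
    · rw [if_pos h1]
      refine Finset.sum_congr rfl fun x _ => ?_
      by_cases h2 : (fun k : {k // k ∈ A} => x k.1) = v <;> simp [Prod.ext_iff, h1, h2]
    · rw [if_neg h1]
      refine Finset.sum_eq_zero fun x _ => ?_
      simp [Prod.ext_iff, h1]
  rw [Finset.sum_congr rfl fun a _ => step2 a]
  rw [Finset.sum_ite_eq' Finset.univ q0]
  simp only [Finset.mem_univ, if_pos]
  have step3 : (∑ x : ∀ k, X k, if (fun k : {k // k ∈ A} => x k.1) = v then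
      pQ q0 * (∏ k, pX k q0 (x k)) else 0) =
      pQ q0 * ∑ x : ∀ k, X k, (if (fun k : {k // k ∈ A} => x k.1) = v then
        (∏ k, pX k q0 (x k)) else 0) := by
    rw [Finset.mul_sum]
    refine Finset.sum_congr rfl fun x _ => ?_
    by_cases h2 : (fun k : {k // k ∈ A} => x k.1) = v <;> simp [h2]
  rw [step3]
  rw [sum_pi_ite A (fun k t => pX k q0 t) v]
  have : ∏ k : {k // ¬ k ∈ A}, (∑ t, pX k.1 q0 t) = 1 := by
    rw [Finset.prod_congr rfl fun k _ => (hpX k.1 q0).2]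
    simp
  rw [this, mul_one]
lemma condMutInfo_X_zero (hpQ : IsPMF pQ) (hpX : ∀ k q, IsPMF (pX k q))
    (hW : ∀ x, IsPMF (W x)) (A B C : Finset (Fin K))
    (hAB : Disjoint A B) (hAC : Disjoint A C) (hBC : Disjoint B C) :
    condMutInfo (SjointP pQ pX W)
      (fun z => fun k : {k // k ∈ A} => z.2.1 k.1)
      (fun z => fun k : {k // k ∈ B} => z.2.1 k.1)
      (fun z => ((fun k : {k // k ∈ C} => z.2.1 k.1), z.1)) = 0 := by
  classical
  set p := SjointP pQ pX W with hpdef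
  have hres : ∀ (S : Finset (Fin K)) (z z' : Q × (∀ k, X k) × Yo),
      ((fun k : {k // k ∈ S} => z.2.1 k.1) = fun k : {k // k ∈ S} => z'.2.1 k.1) ↔
      ∀ k ∈ S, z.2.1 k = z'.2.1 k :=
    fun S z z' => ⟨fun h k hk => congrFun h ⟨k, hk⟩, fun h => funext fun k => h k.1 k.2⟩
  -- canonicalize the four entropies
  have e1 : entOf p (fun z => ((fun k : {k // k ∈ A} => z.2.1 k.1),
        ((fun k : {k // k ∈ C} => z.2.1 k.1), z.1))) =
      entOf p (fun z => ((fun k : {k // k ∈ A ∪ C} => z.2.1 k.1), z.1)) := by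
    refine entOf_congr p fun z z' => ?_
    simp only [Prod.ext_iff, hres, Finset.mem_union]
    constructor
    · rintro ⟨h1, h2, h3⟩
      exact ⟨fun k hk => hk.elim (h1 k) (h2 k), h3⟩
    · rintro ⟨h1, h3⟩
      exact ⟨fun k hk => h1 k (Or.inl hk), fun k hk => h1 k (Or.inr hk), h3⟩
  have e2 : entOf p (fun z => ((fun k : {k // k ∈ B} => z.2.1 k.1),
        ((fun k : {k // k ∈ C} => z.2.1 k.1), z.1))) =
      entOf p (fun z => ((fun k : {k // k ∈ B ∪ C} => z.2.1 k.1), z.1)) := by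
    refine entOf_congr p fun z z' => ?_
    simp only [Prod.ext_iff, hres, Finset.mem_union]
    constructor
    · rintro ⟨h1, h2, h3⟩
      exact ⟨fun k hk => hk.elim (h1 k) (h2 k), h3⟩
    · rintro ⟨h1, h3⟩
      exact ⟨fun k hk => h1 k (Or.inl hk), fun k hk => h1 k (Or.inr hk), h3⟩
  have e3 : entOf p (fun z => ((fun k : {k // k ∈ A} => z.2.1 k.1),
        (fun k : {k // k ∈ B} => z.2.1 k.1),
        ((fun k : {k // k ∈ C} => z.2.1 k.1), z.1))) =
      entOf p (fun z => ((fun k : {k // k ∈ A ∪ B ∪ C} => z.2.1 k.1), z.1)) := by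
    refine entOf_congr p fun z z' => ?_
    simp only [Prod.ext_iff, hres, Finset.mem_union]
    constructor
    · rintro ⟨h1, h2, h3, h4⟩
      exact ⟨fun k hk => hk.elim (fun hk' => hk'.elim (h1 k) (h2 k)) (h3 k), h4⟩
    · rintro ⟨h1, h4⟩
      exact ⟨fun k hk => h1 k (Or.inl (Or.inl hk)), fun k hk => h1 k (Or.inl (Or.inr hk)),
        fun k hk => h1 k (Or.inr hk), h4⟩
  -- entropy of a canonical variable
  have hent : ∀ S : Finset (Fin K),
      entOf p (fun z => ((fun k : {k // k ∈ S} => z.2.1 k.1), z.1)) =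
      -∑ z, p z * Real.logb 2 (pQ z.1 * ∏ k ∈ S, pX k z.1 (z.2.1 k)) := by
    intro S
    rw [entOf_eq_sum]
    congr 1
    refine Finset.sum_congr rfl fun z _ => ?_
    rw [hpdef, distOf_XQ pQ pX W hpX hW S (fun k : {k // k ∈ S} => z.2.1 k.1) z.1]
    rw [← Finset.prod_coe_sort S (fun k => pX k z.1 (z.2.1 k))]
  rw [condMutInfo, e1, e2, e3, hent, hent, hent, hent]
  rw [show ∀ a b c d : ℝ, -a + -b - -c - -d = (c + d) - (a + b) from fun a b c d => by ring]
  rw [← Finset.sum_add_distrib, ← Finset.sum_add_distrib, ← Finset.sum_sub_distrib]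
  refine Finset.sum_eq_zero fun z _ => ?_
  by_cases hz : p z = 0
  · simp [hz]
  · have hq : pQ z.1 ≠ 0 := by
      intro h; apply hz; rw [hpdef]; unfold SjointP; rw [h]; ring
    have hx : ∀ k : Fin K, pX k z.1 (z.2.1 k) ≠ 0 := by
      intro k hk
      apply hz
      rw [hpdef]; unfold SjointP
      rw [Finset.prod_eq_zero (Finset.mem_univ k) hk]
      ring
    have hlog : ∀ S : Finset (Fin K),
        Real.logb 2 (pQ z.1 * ∏ k ∈ S, pX k z.1 (z.2.1 k)) =
        Real.logb 2 (pQ z.1) + ∑ k ∈ S, Real.logb 2 (pX k z.1 (z.2.1 k)) := by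
      intro S
      rw [Real.logb_mul hq (Finset.prod_ne_zero_iff.2 fun k _ => hx k),
        Real.logb_prod S _ fun k _ => hx k]
    rw [hlog, hlog, hlog, hlog]
    rw [Finset.sum_union (Finset.disjoint_union_left.2 ⟨hAC, hBC⟩ : Disjoint (A ∪ B) C),
      Finset.sum_union hAB, Finset.sum_union hAC, Finset.sum_union hBC]
    ring
lemma resEq (S : Finset (Fin K)) (z z' : Q × (∀ k, X k) × Yo) :
    ((fun k : {k // k ∈ S} => z.2.1 k.1) = fun k : {k // k ∈ S} => z'.2.1 k.1) ↔
      ∀ k ∈ S, z.2.1 k = z'.2.1 k :=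
  ⟨fun h k hk => congrFun h ⟨k, hk⟩, fun h => funext fun k => h k.1 k.2⟩

/-- Chain rule for the channel variables:
`I(X_{S1∪S2}; Y | X_E, Q) = I(X_{S1}; Y | X_E, Q) + I(X_{S2}; Y | X_{S1∪E}, Q)`. -/
lemma chainX (S1 S2 E : Finset (Fin K)) :
    condMutInfo (SjointP pQ pX W)
      (fun z => fun k : {k // k ∈ S1 ∪ S2} => z.2.1 k.1)
      (fun z => z.2.2)
      (fun z => ((fun k : {k // k ∈ E} => z.2.1 k.1), z.1)) =
    condMutInfo (SjointP pQ pX W)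
      (fun z => fun k : {k // k ∈ S1} => z.2.1 k.1)
      (fun z => z.2.2)
      (fun z => ((fun k : {k // k ∈ E} => z.2.1 k.1), z.1)) +
    condMutInfo (SjointP pQ pX W)
      (fun z => fun k : {k // k ∈ S2} => z.2.1 k.1)
      (fun z => z.2.2)
      (fun z => ((fun k : {k // k ∈ S1 ∪ E} => z.2.1 k.1), z.1)) := by
  set p := SjointP pQ pX W
  have step1 : condMutInfo p
      (fun z => fun k : {k // k ∈ S1 ∪ S2} => z.2.1 k.1)
      (fun z => z.2.2)
      (fun z => ((fun k : {k // k ∈ E} => z.2.1 k.1), z.1)) =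
      condMutInfo p
      (fun z => ((fun k : {k // k ∈ S1} => z.2.1 k.1), (fun k : {k // k ∈ S2} => z.2.1 k.1)))
      (fun z => z.2.2)
      (fun z => ((fun k : {k // k ∈ E} => z.2.1 k.1), z.1)) := by
    refine condMutInfo_congr p ?_ (fun _ _ => Iff.rfl) (fun _ _ => Iff.rfl)
    intro z z'
    simp only [Prod.ext_iff, resEq, Finset.mem_union]
    constructor
    · intro h1
      exact ⟨fun k hk => h1 k (Or.inl hk), fun k hk => h1 k (Or.inr hk)⟩
    · rintro ⟨h1, h2⟩ k hk
      exact hk.elim (h1 k) (h2 k)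
  have step2 := condMutInfo_pair p
    (fun z : Q × (∀ k, X k) × Yo => fun k : {k // k ∈ S1} => z.2.1 k.1)
    (fun z => fun k : {k // k ∈ S2} => z.2.1 k.1)
    (fun z => z.2.2)
    (fun z => ((fun k : {k // k ∈ E} => z.2.1 k.1), z.1))
  have step3 : condMutInfo p
      (fun z => fun k : {k // k ∈ S2} => z.2.1 k.1)
      (fun z => z.2.2)
      (fun z => ((fun k : {k // k ∈ S1} => z.2.1 k.1),
        ((fun k : {k // k ∈ E} => z.2.1 k.1), z.1))) =
      condMutInfo p
      (fun z => fun k : {k // k ∈ S2} => z.2.1 k.1)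
      (fun z => z.2.2)
      (fun z => ((fun k : {k // k ∈ S1 ∪ E} => z.2.1 k.1), z.1)) := by
    refine condMutInfo_congr p (fun _ _ => Iff.rfl) (fun _ _ => Iff.rfl) ?_
    intro z z'
    simp only [Prod.ext_iff, resEq, Finset.mem_union]
    constructor
    · rintro ⟨h1, h2, h3⟩
      exact ⟨fun k hk => hk.elim (h1 k) (h2 k), h3⟩
    · rintro ⟨h1, h3⟩
      exact ⟨fun k hk => h1 k (Or.inl hk), fun k hk => h1 k (Or.inr hk), h3⟩
  rw [step1, step2, step3]

/-- Conditioning on extra (conditionally independent) inputs can only increase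
the conditional mutual information. -/
lemma monoX (hpQ : IsPMF pQ) (hpX : ∀ k q, IsPMF (pX k q)) (hW : ∀ x, IsPMF (W x))
    (S T E : Finset (Fin K)) (hST : Disjoint S T) (hSE : Disjoint S E) (hTE : Disjoint T E) :
    condMutInfo (SjointP pQ pX W)
      (fun z => fun k : {k // k ∈ S} => z.2.1 k.1)
      (fun z => z.2.2)
      (fun z => ((fun k : {k // k ∈ E} => z.2.1 k.1), z.1)) ≤
    condMutInfo (SjointP pQ pX W)
      (fun z => fun k : {k // k ∈ S} => z.2.1 k.1)
      (fun z => z.2.2)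
      (fun z => ((fun k : {k // k ∈ T ∪ E} => z.2.1 k.1), z.1)) := by
  set p := SjointP pQ pX W with hp
  have hzero := condMutInfo_X_zero pQ pX W hpQ hpX hW S T E hST hSE hTE
  have hmono := condMutInfo_mono_of_indep (SjointP_isPMF pQ pX W hpQ hpX hW)
    (fun z : Q × (∀ k, X k) × Yo => fun k : {k // k ∈ S} => z.2.1 k.1)
    (fun z => fun k : {k // k ∈ T} => z.2.1 k.1)
    (fun z => z.2.2)
    (fun z => ((fun k : {k // k ∈ E} => z.2.1 k.1), z.1))
    hzero
  refine hmono.trans_eq ?_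
  refine condMutInfo_congr p (fun _ _ => Iff.rfl) (fun _ _ => Iff.rfl) ?_
  intro z z'
  simp only [Prod.ext_iff, resEq, Finset.mem_union]
  constructor
  · rintro ⟨h1, h2, h3⟩
    exact ⟨fun k hk => hk.elim (h1 k) (h2 k), h3⟩
  · rintro ⟨h1, h3⟩
    exact ⟨fun k hk => h1 k (Or.inl hk), fun k hk => h1 k (Or.inr hk), h3⟩
/-- A set `S ⊆ [K]` is *decodable* if `R_T ≤ I(X_T; Y1 | X_{S \ T}, Q)` for all `T ⊆ S`. -/
def IsDecodableSet (R : Fin K → ℝ) (S : Finset (Fin K)) : Prop :=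
  ∀ T ⊆ S, ∑ k ∈ T, R k ≤
    condMutInfo (SjointP pQ pX W)
      (fun z => fun k : {k // k ∈ T} => z.2.1 k.1)
      (fun z => z.2.2)
      (fun z => ((fun k : {k // k ∈ S \ T} => z.2.1 k.1), z.1))
/-- **Proposition 2.** Let `S*` be the unique maximal decodable set (it contains every
decodable set). Then for every nonempty `U ⊆ [K] \ S*`,
`R_U > I(X_U; Y1 | X_{S*}, Q)`. -/
theorem rates_outside_maximal_decodable_set_too_large
    (hpQ : IsPMF pQ) (hpX : ∀ k q, IsPMF (pX k q)) (hW : ∀ x, IsPMF (W x))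
    (R : Fin K → ℝ) (hR : ∀ k, 0 ≤ R k) (Sstar : Finset (Fin K))
    (hdec : IsDecodableSet pQ pX W R Sstar)
    (hmax : ∀ S : Finset (Fin K), IsDecodableSet pQ pX W R S → S ⊆ Sstar)
    (U : Finset (Fin K)) (hUne : U.Nonempty) (hU : U ⊆ Sstarᶜ) :
    condMutInfo (SjointP pQ pX W)
        (fun z => fun k : {k // k ∈ U} => z.2.1 k.1)
        (fun z => z.2.2)
        (fun z => ((fun k : {k // k ∈ Sstar} => z.2.1 k.1), z.1)) <
      ∑ k ∈ U, R k := by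
  classical
  by_contra hcon
  push_neg at hcon
  have hpmf : IsPMF (SjointP pQ pX W) := SjointP_isPMF pQ pX W hpQ hpX hW
  have hex : ∃ n : ℕ, ∃ V : Finset (Fin K), (V.Nonempty ∧ V ⊆ Sstarᶜ ∧
      ∑ k ∈ V, R k ≤ condMutInfo (SjointP pQ pX W)
        (fun z => fun k : {k // k ∈ V} => z.2.1 k.1)
        (fun z => z.2.2)
        (fun z => ((fun k : {k // k ∈ Sstar} => z.2.1 k.1), z.1))) ∧ V.card = n :=
    ⟨U.card, U, ⟨hUne, hU, hcon⟩, rfl⟩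
  obtain ⟨U₀, ⟨hU₀ne, hU₀c, hU₀le⟩, hU₀card⟩ := Nat.find_spec hex
  have hmin : ∀ V : Finset (Fin K), V.Nonempty → V ⊆ Sstarᶜ → V.card < U₀.card →
      condMutInfo (SjointP pQ pX W)
        (fun z => fun k : {k // k ∈ V} => z.2.1 k.1)
        (fun z => z.2.2)
        (fun z => ((fun k : {k // k ∈ Sstar} => z.2.1 k.1), z.1)) < ∑ k ∈ V, R k := by
    intro V hVne hVc hVcard
    by_contra hle
    push_neg at hle
    have hfind := Nat.find_min' hex ⟨V, ⟨hVne, hVc, hle⟩, rfl⟩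
    omega
  have hU₀S : Disjoint U₀ Sstar := by
    rw [Finset.disjoint_left]
    intro k hk hkS
    exact (Finset.mem_compl.1 (hU₀c hk)) hkS
  -- Claim: for every V ⊆ U₀, R_V ≤ I(X_V; Y | X_{S* ∪ (U₀ \ V)}, Q)
  have claim2 : ∀ V ⊆ U₀, ∑ k ∈ V, R k ≤ condMutInfo (SjointP pQ pX W)
      (fun z => fun k : {k // k ∈ V} => z.2.1 k.1)
      (fun z => z.2.2)
      (fun z => ((fun k : {k // k ∈ Sstar ∪ (U₀ \ V)} => z.2.1 k.1), z.1)) := by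
    intro V hVU
    by_cases hVe : V = U₀
    · subst hVe
      rw [Finset.sdiff_self, Finset.union_empty]
      exact hU₀le
    · by_cases hVemp : V = ∅
      · subst hVemp
        simp only [Finset.sum_empty]
        exact condMutInfo_nonneg hpmf _ _ _
      · have hVne : V.Nonempty := Finset.nonempty_iff_ne_empty.2 hVemp
        have hDne : (U₀ \ V).Nonempty := by
          rw [Finset.sdiff_nonempty]
          intro hUV
          exact hVe (Finset.Subset.antisymm hVU hUV)
        have hDc : U₀ \ V ⊆ Sstarᶜ := fun k hk => hU₀c (Finset.sdiff_subset hk)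
        have hDcard : (U₀ \ V).card < U₀.card := by
          have h1 := Finset.card_sdiff_of_subset hVU
          have h2 : 0 < V.card := Finset.card_pos.2 hVne
          have h3 := Finset.card_le_card hVU
          omega
        have hDU : (U₀ \ V) ∪ V = U₀ := Finset.sdiff_union_of_subset hVU
        have hchain := chainX pQ pX W (U₀ \ V) V Sstar
        rw [hDU] at hchain
        have hDlt := hmin (U₀ \ V) hDne hDc hDcard
        have hsum : ∑ k ∈ U₀, R k = ∑ k ∈ U₀ \ V, R k + ∑ k ∈ V, R k := by
          rw [← Finset.sum_union Finset.sdiff_disjoint, hDU]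
        rw [hchain] at hU₀le
        rw [show Sstar ∪ (U₀ \ V) = (U₀ \ V) ∪ Sstar from Finset.union_comm _ _]
        linarith
  -- S* ∪ U₀ is decodable
  have hdecS : IsDecodableSet pQ pX W R (Sstar ∪ U₀) := by
    intro T hT
    have hT1S : T ∩ Sstar ⊆ Sstar := Finset.inter_subset_right
    have hT2U : T ∩ U₀ ⊆ U₀ := Finset.inter_subset_right
    have hT12 : (T ∩ Sstar) ∪ (T ∩ U₀) = T := by
      ext k
      simp only [Finset.mem_union, Finset.mem_inter]
      constructor
      · rintro (⟨h, _⟩ | ⟨h, _⟩) <;> exact h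
      · intro hk
        rcases Finset.mem_union.1 (hT hk) with h | h
        · exact Or.inl ⟨hk, h⟩
        · exact Or.inr ⟨hk, h⟩
    have hE : (Sstar ∪ U₀) \ T = (Sstar \ (T ∩ Sstar)) ∪ (U₀ \ (T ∩ U₀)) := by
      ext k
      simp only [Finset.mem_sdiff, Finset.mem_union, Finset.mem_inter]
      tauto
    have hsumT : ∑ k ∈ T, R k = ∑ k ∈ T ∩ Sstar, R k + ∑ k ∈ T ∩ U₀, R k := by
      rw [← hT12, Finset.sum_union]
      · rw [hT12]
      · exact hU₀S.symm.mono hT1S hT2U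
    have hXT : condMutInfo (SjointP pQ pX W)
        (fun z => fun k : {k // k ∈ T} => z.2.1 k.1) (fun z => z.2.2)
        (fun z => ((fun k : {k // k ∈ (Sstar \ (T ∩ Sstar)) ∪ (U₀ \ (T ∩ U₀))} =>
          z.2.1 k.1), z.1)) =
        condMutInfo (SjointP pQ pX W)
        (fun z => fun k : {k // k ∈ (T ∩ Sstar) ∪ (T ∩ U₀)} => z.2.1 k.1) (fun z => z.2.2)
        (fun z => ((fun k : {k // k ∈ (Sstar \ (T ∩ Sstar)) ∪ (U₀ \ (T ∩ U₀))} =>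
          z.2.1 k.1), z.1)) := by
      refine condMutInfo_congr _ ?_ (fun _ _ => Iff.rfl) (fun _ _ => Iff.rfl)
      intro z z'
      rw [resEq, resEq, hT12]
    rw [hsumT, hE, hXT]
    rw [chainX pQ pX W (T ∩ Sstar) (T ∩ U₀) ((Sstar \ (T ∩ Sstar)) ∪ (U₀ \ (T ∩ U₀)))]
    have hb1 : ∑ k ∈ T ∩ Sstar, R k ≤ condMutInfo (SjointP pQ pX W)
        (fun z => fun k : {k // k ∈ T ∩ Sstar} => z.2.1 k.1)
        (fun z => z.2.2)
        (fun z => ((fun k : {k // k ∈ (Sstar \ (T ∩ Sstar)) ∪ (U₀ \ (T ∩ U₀))} =>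
          z.2.1 k.1), z.1)) := by
      have h0 := hdec (T ∩ Sstar) hT1S
      have h1 := monoX pQ pX W hpQ hpX hW (T ∩ Sstar) (U₀ \ (T ∩ U₀)) (Sstar \ (T ∩ Sstar))
        (hU₀S.symm.mono hT1S Finset.sdiff_subset)
        Finset.disjoint_sdiff
        (hU₀S.mono Finset.sdiff_subset Finset.sdiff_subset)
      rw [Finset.union_comm (U₀ \ (T ∩ U₀)) (Sstar \ (T ∩ Sstar))] at h1
      exact h0.trans h1
    have hb2 : ∑ k ∈ T ∩ U₀, R k ≤ condMutInfo (SjointP pQ pX W)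
        (fun z => fun k : {k // k ∈ T ∩ U₀} => z.2.1 k.1)
        (fun z => z.2.2)
        (fun z => ((fun k : {k // k ∈ (T ∩ Sstar) ∪ ((Sstar \ (T ∩ Sstar)) ∪ (U₀ \ (T ∩ U₀)))}
          => z.2.1 k.1), z.1)) := by
      have h0 := claim2 (T ∩ U₀) hT2U
      rw [show (T ∩ Sstar) ∪ ((Sstar \ (T ∩ Sstar)) ∪ (U₀ \ (T ∩ U₀)))
          = Sstar ∪ (U₀ \ (T ∩ U₀)) from by
        ext k
        simp only [Finset.mem_union, Finset.mem_sdiff, Finset.mem_inter]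
        tauto]
      exact h0
    linarith
  have hsub := hmax (Sstar ∪ U₀) hdecS
  obtain ⟨k, hk⟩ := hU₀ne
  exact (Finset.mem_compl.1 (hU₀c hk)) (hsub (Finset.mem_union_right _ hk))
end SingleLetter
end
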